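/- Under the same definitions of thresholds and constants α_{-L},...,α_L as in Algorithm 2 (with 0 < S_1 < ... < S_L < 1, 0 < T_1 < ... < T_L < 1, T_1 = S_1, T_l > S_l for l ≥ 2), the sequence is strictly monotone: α_L > α_{L-1} > ... > α_1 > α_0 = 1 > α_{-1} > ... > α_{-L} = 0. -/

import Mathlib

/-- The pair (α_{L−k}, α_{−(L−k)}) of constants of Algorithm 2, computed by downward
recursion from level L. -/
noncomputable def alphaPair (L : ℕ) (S T : ℕ → ℝ) : ℕ → ℝ × ℝ
  | 0 => (1 / S L, 0)
  | k + 1 =>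
      let p := alphaPair L S T k
      let l := L - (k + 1)
      let a := ((1 - S l) * T (l + 1) * p.1 + (1 - S l) * (1 - T (l + 1)) * p.2
                  - (1 - T (l + 1))) / (T (l + 1) - S l)
      (a, (1 - S l * a) / (1 - S l))

/-- The constants α_z, z ∈ {−L,…,L}, of Algorithm 2 (α_0 = 1). -/
noncomputable def alphaC (L : ℕ) (S T : ℕ → ℝ) (z : ℤ) : ℝ :=
  if z = 0 then 1
  else if 0 < z then (alphaPair L S T (L - z.toNat)).1
  else (alphaPair L S T (L - (-z).toNat)).2

/-!
Write `a_l = α_l` and `b_l = α_{-l}`. One step of the recursion keeps the `S_l`-weighted average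
`S_l a_l + (1 - S_l) b_l` equal to `1` and leaves the `T_{l+1}`-weighted average unchanged. Hence
`(T_{l+1} - S_l)(a_l - b_l) = (T_{l+1} - S_{l+1})(a_{l+1} - b_{l+1})`, so the gap `a_l - b_l`
shrinks but stays positive, and an interval with fixed `T_{l+1}`-weighted average whose length
shrinks has both endpoints move inwards: `b_{l+1} < b_l < a_l < a_{l+1}`. At level 1 the
`S_1`-weighted average is `1`, so `b_1 < 1 < a_1`.
-/

open Set

/-- The step `(α_{l+1}, α_{-(l+1)}) ↦ (α_l, α_{-l})` of the recursion, with `s = S_l`,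
`t = T_{l+1}`. -/
noncomputable def alphaStep (s t : ℝ) (p : ℝ × ℝ) : ℝ × ℝ :=
  let a := ((1 - s) * t * p.1 + (1 - s) * (1 - t) * p.2 - (1 - t)) / (t - s)
  (a, (1 - s * a) / (1 - s))

section alphaStep

variable {s s' t : ℝ} {p : ℝ × ℝ}

lemma alphaStep_average_eq_one (hs : s ≠ 1) :
    s * (alphaStep s t p).1 + (1 - s) * (alphaStep s t p).2 = 1 := by
  have : 1 - s ≠ 0 := sub_ne_zero.2 hs.symm
  simp only [alphaStep]
  field_simp
  ring

lemma alphaStep_average_eq (hs : s ≠ 1) (hst : s ≠ t) :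
    t * (alphaStep s t p).1 + (1 - t) * (alphaStep s t p).2 = t * p.1 + (1 - t) * p.2 := by
  have : 1 - s ≠ 0 := sub_ne_zero.2 hs.symm
  have : t - s ≠ 0 := sub_ne_zero.2 hst.symm
  simp only [alphaStep]
  field_simp
  ring

lemma alphaStep_gap (hs : s ≠ 1) (hst : s ≠ t) (hmix : s' * p.1 + (1 - s') * p.2 = 1) :
    (t - s) * ((alphaStep s t p).1 - (alphaStep s t p).2) = (t - s') * (p.1 - p.2) := by
  have : 1 - s ≠ 0 := sub_ne_zero.2 hs.symm
  have : t - s ≠ 0 := sub_ne_zero.2 hst.symm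
  simp only [alphaStep]
  field_simp
  linear_combination (1 - s) * hmix

lemma alphaStep_nested (hs : 0 < s) (hss' : s < s') (hs't : s' < t) (ht : t < 1)
    (hmix : s' * p.1 + (1 - s') * p.2 = 1) (hp : p.2 < p.1) :
    p.2 < (alphaStep s t p).2 ∧ (alphaStep s t p).2 < (alphaStep s t p).1 ∧
      (alphaStep s t p).1 < p.1 := by
  have hs1 : s ≠ 1 := by linarith
  have hst : s ≠ t := by linarith
  set q := alphaStep s t p
  have hgap := alphaStep_gap hs1 hst hmix
  have havg : t * q.1 + (1 - t) * q.2 = t * p.1 + (1 - t) * p.2 := alphaStep_average_eq hs1 hst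
  have hq : 0 < q.1 - q.2 := by
    nlinarith [mul_pos (sub_pos.2 hs't) (sub_pos.2 hp)]
  have hshrink : q.1 - q.2 < p.1 - p.2 := by
    nlinarith [mul_pos (sub_pos.2 hss') (sub_pos.2 hp)]
  refine ⟨?_, by linarith, ?_⟩
  · nlinarith [mul_pos (show 0 < t by linarith) (sub_pos.2 hshrink)]
  · nlinarith [mul_pos (sub_pos.2 ht) (sub_pos.2 hshrink)]

end alphaStep

lemma alphaPair_sub_of_lt {L l : ℕ} (S T : ℕ → ℝ) (hl : l < L) :
    alphaPair L S T (L - l) = alphaStep (S l) (T (l + 1)) (alphaPair L S T (L - (l + 1))) := by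
  obtain ⟨k, hk⟩ : ∃ k, L - l = k + 1 := ⟨L - (l + 1), by omega⟩
  have hkl : L - (l + 1) = k := by omega
  have hLk : L - (k + 1) = l := by omega
  rw [hk, hkl, alphaPair, hLk]
  rfl

lemma alphaC_natCast {L n : ℕ} (S T : ℕ → ℝ) (hn : 0 < n) :
    alphaC L S T n = (alphaPair L S T (L - n)).1 := by
  simp [alphaC, hn.ne']

lemma alphaC_neg_natCast {L n : ℕ} (S T : ℕ → ℝ) (hn : 0 < n) :
    alphaC L S T (-n) = (alphaPair L S T (L - n)).2 := by
  simp [alphaC, hn.ne']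

lemma alphaC_zero (L : ℕ) (S T : ℕ → ℝ) : alphaC L S T 0 = 1 := if_pos rfl

lemma alphaC_neg_self {L : ℕ} (S T : ℕ → ℝ) (hL : 0 < L) : alphaC L S T (-L) = 0 := by
  rw [alphaC_neg_natCast S T hL, Nat.sub_self]
  rfl

lemma lt_one_and_one_lt_of_average_eq_one {s : ℝ} {p : ℝ × ℝ} (hs0 : 0 < s) (hs1 : s < 1)
    (hmix : s * p.1 + (1 - s) * p.2 = 1) (hp : p.2 < p.1) : p.2 < 1 ∧ 1 < p.1 := by
  constructor <;> nlinarith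

structure Thresholds (L : ℕ) (S T : ℕ → ℝ) : Prop where
  S_one_pos : 0 < S 1
  strictMonoOn_S : StrictMonoOn S (Icc 1 L)
  S_lt_one : S L < 1
  S_lt_T : ∀ l, 2 ≤ l → l ≤ L → S l < T l
  T_lt_one : ∀ l, 2 ≤ l → l ≤ L → T l < 1

namespace Thresholds

variable {L : ℕ} {S T : ℕ → ℝ}

lemma S_pos (h : Thresholds L S T) {l : ℕ} (hl : l ∈ Icc 1 L) : 0 < S l :=
  h.S_one_pos.trans_le <| h.strictMonoOn_S.monotoneOn ⟨le_rfl, hl.1.trans hl.2⟩ hl hl.1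

lemma alphaPair_average_eq_one_and_lt (h : Thresholds L S T) {l : ℕ} (hl : 1 ≤ l)
    (hlL : l ≤ L) :
    S l * (alphaPair L S T (L - l)).1 + (1 - S l) * (alphaPair L S T (L - l)).2 = 1 ∧
      (alphaPair L S T (L - l)).2 < (alphaPair L S T (L - l)).1 := by
  induction hlL using Nat.decreasingInduction with
  | self =>
    have hSL := h.S_pos ⟨hl, le_rfl⟩
    simp only [Nat.sub_self, alphaPair]
    exact ⟨by simp [hSL.ne'], by positivity⟩
  | of_succ l hlL ih =>
    obtain ⟨hmix, hp⟩ := ih (by omega)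
    have hSl := h.S_pos ⟨hl, hlL.le⟩
    have hSsucc : S l < S (l + 1) :=
      h.strictMonoOn_S ⟨hl, hlL.le⟩ ⟨by omega, hlL⟩ (by omega)
    have hST := h.S_lt_T _ (by omega) hlL
    have hT1 := h.T_lt_one _ (by omega) hlL
    rw [alphaPair_sub_of_lt S T hlL]
    exact ⟨alphaStep_average_eq_one (by linarith),
      (alphaStep_nested hSl hSsucc hST hT1 hmix hp).2.1⟩

lemma S_one_lt_one (h : Thresholds L S T) (hL : 1 ≤ L) : S 1 < 1 :=
  (h.strictMonoOn_S.monotoneOn ⟨le_rfl, hL⟩ ⟨hL, le_rfl⟩ hL).trans_lt h.S_lt_one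

lemma alphaPair_nested (h : Thresholds L S T) {l : ℕ} (hl : 1 ≤ l) (hlL : l < L) :
    (alphaPair L S T (L - (l + 1))).2 < (alphaPair L S T (L - l)).2 ∧
      (alphaPair L S T (L - l)).1 < (alphaPair L S T (L - (l + 1))).1 := by
  obtain ⟨hmix, hp⟩ := h.alphaPair_average_eq_one_and_lt (by omega) hlL
  have hSsucc : S l < S (l + 1) := h.strictMonoOn_S ⟨hl, hlL.le⟩ ⟨by omega, hlL⟩ (by omega)
  rw [alphaPair_sub_of_lt S T hlL]
  obtain ⟨hsnd, -, hfst⟩ := alphaStep_nested (h.S_pos ⟨hl, hlL.le⟩) hSsucc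
    (h.S_lt_T _ (by omega) hlL) (h.T_lt_one _ (by omega) hlL) hmix hp
  exact ⟨hsnd, hfst⟩

lemma alphaC_natCast_lt_succ (h : Thresholds L S T) {n : ℕ} (hn : n < L) :
    alphaC L S T n < alphaC L S T (n + 1) := by
  rw [← Nat.cast_succ, alphaC_natCast S T n.succ_pos]
  rcases n.eq_zero_or_pos with rfl | hn0
  · obtain ⟨hmix, hp⟩ := h.alphaPair_average_eq_one_and_lt le_rfl hn
    rw [Nat.cast_zero, alphaC_zero]
    exact (lt_one_and_one_lt_of_average_eq_one h.S_one_pos (h.S_one_lt_one hn) hmix hp).2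
  · rw [alphaC_natCast S T hn0]
    exact (h.alphaPair_nested hn0 hn).2

lemma alphaC_neg_succ_lt (h : Thresholds L S T) {n : ℕ} (hn : n < L) :
    alphaC L S T (-(n + 1 : ℕ)) < alphaC L S T (-n) := by
  rw [alphaC_neg_natCast S T n.succ_pos]
  rcases n.eq_zero_or_pos with rfl | hn0
  · obtain ⟨hmix, hp⟩ := h.alphaPair_average_eq_one_and_lt le_rfl hn
    rw [Nat.cast_zero, neg_zero, alphaC_zero]
    exact (lt_one_and_one_lt_of_average_eq_one h.S_one_pos (h.S_one_lt_one hn) hmix hp).1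
  · rw [alphaC_neg_natCast S T hn0]
    exact (h.alphaPair_nested hn0 hn).1

end Thresholds

theorem alpha_strict_monotone_general
    (L : ℕ) (hL : 1 ≤ L) (S T : ℕ → ℝ)
    (hS0 : 0 < S 1) (hSmono : ∀ l : ℕ, 1 ≤ l → l < L → S l < S (l + 1)) (hSL : S L < 1)
    (hTmono : ∀ l : ℕ, 1 ≤ l → l < L → T l < T (l + 1)) (hTL : T L < 1)
    (hTS : ∀ l : ℕ, 2 ≤ l → l ≤ L → S l < T l) :
    (∀ z : ℤ, -(L : ℤ) ≤ z → z < L → alphaC L S T z < alphaC L S T (z + 1)) ∧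
    alphaC L S T 0 = 1 ∧ alphaC L S T (-(L : ℤ)) = 0 := by
  have hT : StrictMonoOn T (Icc 1 L) :=
    strictMonoOn_of_lt_add_one ordConnected_Icc fun l _ hl hl' => hTmono l hl.1 hl'.2
  have h : Thresholds L S T :=
    { S_one_pos := hS0
      strictMonoOn_S :=
        strictMonoOn_of_lt_add_one ordConnected_Icc fun l _ hl hl' => hSmono l hl.1 hl'.2
      S_lt_one := hSL
      S_lt_T := hTS
      T_lt_one := fun l hl hlL =>
        (hT.monotoneOn ⟨by omega, hlL⟩ ⟨by omega, le_rfl⟩ hlL).trans_lt hTL }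
  refine ⟨fun z hLz hzL => ?_, alphaC_zero L S T, alphaC_neg_self S T hL⟩
  rcases le_or_gt 0 z with hz | hz
  · lift z to ℕ using hz
    exact h.alphaC_natCast_lt_succ (by omega)
  · obtain ⟨n, rfl⟩ : ∃ n : ℕ, z = -(n + 1 : ℕ) := ⟨(-z - 1).toNat, by omega⟩
    rw [show -((n + 1 : ℕ) : ℤ) + 1 = -n by push_cast; ring]
    exact h.alphaC_neg_succ_lt (by omega)

/-- Lemma 4: the constants of Algorithm 2 are strictly decreasing from
α_L down to α_{−L} = 0, with α_0 = 1. -/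
theorem alpha_strict_monotone
    (L : ℕ) (hL : 1 ≤ L) (S T : ℕ → ℝ)
    (hS0 : 0 < S 1) (hSmono : ∀ l : ℕ, 1 ≤ l → l < L → S l < S (l + 1)) (hSL : S L < 1)
    (hT0 : 0 < T 1) (hTmono : ∀ l : ℕ, 1 ≤ l → l < L → T l < T (l + 1)) (hTL : T L < 1)
    (hTS1 : T 1 = S 1) (hTS : ∀ l : ℕ, 2 ≤ l → l ≤ L → S l < T l) :
    (∀ z : ℤ, -(L : ℤ) ≤ z → z < L → alphaC L S T z < alphaC L S T (z + 1)) ∧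
    alphaC L S T 0 = 1 ∧ alphaC L S T (-(L : ℤ)) = 0 :=
  alpha_strict_monotone_general L hL S T hS0 hSmono hSL hTmono hTL hTS
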